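/- Fix C₄ ≠ 0 and let η̃ be the constant symmetric matrix [[0,0,C₄],[0,C₄,0],[C₄,0,0]]. Then the function F(x¹,x²,x³) = (C₄/2)(x¹)²x³ + (C₄/2)x¹(x²)² + (C₄/8)(x²)⁴/x³ satisfies the WDVV associativity equations with respect to η̃ on the open set {x ∈ ℝ³ : x³ ≠ 0}. -/

import Mathlib

open Matrix

/-- Partial derivative of `g : (Fin n → ℝ) → ℝ` with respect to the `i`-th coordinate. -/
noncomputable def pd {n : ℕ} (g : (Fin n → ℝ) → ℝ) (i : Fin n) (u : Fin n → ℝ) : ℝ :=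
  deriv (fun t => g (Function.update u i t)) (u i)

/-- Third partial derivative `∂ᵢ∂ⱼ∂ₖ g`. -/
noncomputable def pd3rd {n : ℕ} (g : (Fin n → ℝ) → ℝ) (i j k : Fin n)
    (u : Fin n → ℝ) : ℝ :=
  pd (pd (pd g k) j) i u

/-- `F` satisfies the WDVV associativity equations with respect to the constant
symmetric matrix `η̃` on the set `U`:
`Σ_{a,b} (∂ᵢ∂ⱼ∂ₐF) η̃^{ab} (∂_b∂ₖ∂_lF) = Σ_{a,b} (∂ₖ∂ⱼ∂ₐF) η̃^{ab} (∂_b∂ᵢ∂_lF)`. -/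
def SatisfiesWDVV {n : ℕ} (η : Matrix (Fin n) (Fin n) ℝ) (F : (Fin n → ℝ) → ℝ)
    (U : Set (Fin n → ℝ)) : Prop :=
  ∀ x ∈ U, ∀ i j k l : Fin n,
    ∑ a : Fin n, ∑ b : Fin n, pd3rd F i j a x * η⁻¹ a b * pd3rd F b k l x
      = ∑ a : Fin n, ∑ b : Fin n, pd3rd F k j a x * η⁻¹ a b * pd3rd F b i l x

/-!
On `{x³ ≠ 0}` the prepotential is a Laurent polynomial, so its partial derivatives can be
computed termwise, and every third derivative turns out to depend on `s = x²/x³` only. Write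
`A_j = (∂ᵢ∂ⱼ∂ₐF)_{i,a}`. The WDVV equation for `(i, j, k, l)` says that the `(i, k)` entry of
`A_j η̃⁻¹ A_l` is symmetric in `i, k`; as `η̃` and `∂ᵢ∂ⱼ∂ₐF` are symmetric, this follows from
`A_j η̃⁻¹ A_l = A_l η̃⁻¹ A_j`. Since `A_1 = η̃` (`∂₁` is the unit vector field), only the pair
`A_2, A_3` has to be checked, which is a `3 × 3` matrix computation.
-/

open Filter Topology Finset Function

section Locality

variable {n : ℕ} {g h : (Fin n → ℝ) → ℝ} {u : Fin n → ℝ}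

theorem pd_congr_of_eventuallyEq (hgh : g =ᶠ[𝓝 u] h) (i : Fin n) : pd g i u = pd h i u := by
  have hcont : ContinuousAt (update u i) (u i) :=
    (continuous_const.update i continuous_id).continuousAt
  rw [← update_eq_self i u] at hgh
  exact Filter.EventuallyEq.deriv_eq (hcont.tendsto.eventually hgh)

theorem Filter.EventuallyEq.pd (hgh : g =ᶠ[𝓝 u] h) (i : Fin n) : pd g i =ᶠ[𝓝 u] pd h i :=
  hgh.eventuallyEq_nhds.mono fun _ hy => pd_congr_of_eventuallyEq hy i

end Locality

section Monomial

variable {ι G₀ : Type*} [Fintype ι] [DecidableEq ι] [CommGroupWithZero G₀]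

theorem prod_update_zpow (u : ι → G₀) (i : ι) (t : G₀) (e : ι → ℤ) :
    ∏ k, update u i t k ^ e k = t ^ e i * ∏ k ∈ univ.erase i, u k ^ e k := by
  rw [← mul_prod_erase _ _ (mem_univ i), update_self]
  congr 1
  refine prod_congr rfl fun k hk => ?_
  rw [update_of_ne (ne_of_mem_erase hk)]

theorem prod_zpow_sub_single (u : ι → G₀) (i : ι) (e : ι → ℤ) :
    ∏ k, u k ^ (e - Pi.single i 1 : ι → ℤ) k =
      u i ^ (e i - 1) * ∏ k ∈ univ.erase i, u k ^ e k := by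
  rw [← mul_prod_erase _ _ (mem_univ i)]
  simp only [Pi.sub_apply, Pi.single_eq_same]
  congr 1
  refine prod_congr rfl fun k hk => ?_
  rw [Pi.single_eq_of_ne (ne_of_mem_erase hk), sub_zero]

theorem hasDerivAt_monomial_update {u : ι → ℝ} {i : ι} {c : ℝ} {e : ι → ℤ}
    (h : u i ≠ 0 ∨ 0 ≤ e i ∨ c = 0) :
    HasDerivAt (fun t => c * ∏ k, update u i t k ^ e k)
      (c * e i * ∏ k, u k ^ (e - Pi.single i 1 : ι → ℤ) k) (u i) := by
  obtain h | rfl : (u i ≠ 0 ∨ 0 ≤ e i) ∨ c = 0 := by tauto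
  · simp_rw [prod_update_zpow, prod_zpow_sub_single]
    exact (((hasDerivAt_zpow (e i) (u i) h).mul_const _).const_mul c).congr_deriv (by ring)
  · simpa using hasDerivAt_const (u i) (0 : ℝ)

end Monomial

structure LaurentSum (ι : Type*) (n : ℕ) where
  coeff : ι → ℝ
  exp : ι → Fin n → ℤ

namespace LaurentSum

variable {n : ℕ} {ι : Type*}

noncomputable def eval [Fintype ι] (p : LaurentSum ι n) (x : Fin n → ℝ) : ℝ :=
  ∑ m, p.coeff m * ∏ k, x k ^ p.exp m k

def pderiv (i : Fin n) (p : LaurentSum ι n) : LaurentSum ι n where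
  coeff m := p.coeff m * p.exp m i
  exp m := p.exp m - Pi.single i 1

/-- The alternative `p.coeff m = 0` is needed because `pderiv` keeps the vanishing derivatives
of terms constant in `x k`, with exponent `-1`. -/
def RegularAt (p : LaurentSum ι n) (x : Fin n → ℝ) : Prop :=
  ∀ k, x k ≠ 0 ∨ ∀ m, 0 ≤ p.exp m k ∨ p.coeff m = 0

variable {p : LaurentSum ι n} {u : Fin n → ℝ}

theorem RegularAt.pderiv (hu : p.RegularAt u) (i : Fin n) : (p.pderiv i).RegularAt u := by
  refine fun k => (hu k).imp_right fun h m => ?_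
  simp only [LaurentSum.pderiv, Pi.sub_apply, Pi.single_apply]
  rcases h m with h | h
  · split_ifs with hki
    · subst hki
      rcases h.eq_or_lt with h | h
      · simp [← h]
      · left; omega
    · simp [h]
  · simp [h]

theorem RegularAt.eventually (hu : p.RegularAt u) : ∀ᶠ y in 𝓝 u, p.RegularAt y := by
  refine eventually_all.2 fun k => ?_
  rcases hu k with h | h
  · exact ((continuous_apply k).continuousAt.eventually_ne h).mono fun _ => .inl
  · exact .of_forall fun _ => .inr h

variable [Fintype ι]

theorem RegularAt.hasDerivAt_eval_update (hu : p.RegularAt u) (i : Fin n) :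
    HasDerivAt (fun t => p.eval (update u i t)) ((p.pderiv i).eval u) (u i) :=
  HasDerivAt.fun_sum fun m _ => hasDerivAt_monomial_update <| (hu i).imp_right fun h => h m

theorem RegularAt.pd_eval (hu : p.RegularAt u) (i : Fin n) :
    pd p.eval i u = (p.pderiv i).eval u :=
  (hu.hasDerivAt_eval_update i).deriv

theorem RegularAt.pd_eval_eventuallyEq (hu : p.RegularAt u) (i : Fin n) :
    pd p.eval i =ᶠ[𝓝 u] (p.pderiv i).eval :=
  hu.eventually.mono fun _ hy => hy.pd_eval i

theorem RegularAt.pd3rd_eval (hu : p.RegularAt u) (i j a : Fin n) :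
    pd3rd p.eval i j a u = (((p.pderiv a).pderiv j).pderiv i).eval u := by
  have h₂ := ((hu.pd_eval_eventuallyEq a).pd j).trans ((hu.pderiv a).pd_eval_eventuallyEq j)
  exact (pd_congr_of_eventuallyEq h₂ i).trans (((hu.pderiv a).pderiv j).pd_eval i)

end LaurentSum

theorem wdvv_of_commute {ι R : Type*} [Fintype ι] [CommRing R] {M : ι → Matrix ι ι R}
    {G : Matrix ι ι R} (hG : G.IsSymm) (hM : ∀ j, (M j).IsSymm)
    (hswap : ∀ i j a, M j i a = M i j a) (hcomm : ∀ j l, M j * G * M l = M l * G * M j)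
    (i j k l : ι) :
    ∑ a, ∑ b, M j i a * G a b * M k b l = ∑ a, ∑ b, M j k a * G a b * M i b l := by
  have hprod : ∀ i k, ∑ a, ∑ b, M j i a * G a b * M k b l = (M j * G * M l) i k := by
    intro i k
    simp only [mul_apply, sum_mul]
    rw [sum_comm]
    refine sum_congr rfl fun b _ => sum_congr rfl fun a _ => ?_
    rw [hswap b k l, (hM b).apply l k, hswap l b k]
  rw [hprod, hprod, ← transpose_apply (M j * G * M l), transpose_mul, transpose_mul, hG.eq,
    (hM j).eq, (hM l).eq, ← Matrix.mul_assoc, hcomm]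

noncomputable def prepotential (C : ℝ) : LaurentSum (Fin 3) 3 where
  coeff := ![C / 2, C / 2, C / 8]
  exp := ![![2, 0, 1], ![1, 2, 0], ![0, 4, -1]]

theorem prepotential_eval (C : ℝ) :
    (prepotential C).eval = fun x : Fin 3 → ℝ =>
      C / 2 * (x 0) ^ 2 * x 2 + C / 2 * x 0 * (x 1) ^ 2 + C / 8 * (x 1) ^ 4 / x 2 := by
  ext x
  simp [prepotential, LaurentSum.eval, Fin.sum_univ_three, Fin.prod_univ_three, div_eq_mul_inv]
  ring

theorem prepotential_regularAt (C : ℝ) {x : Fin 3 → ℝ} (hx : x 2 ≠ 0) :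
    (prepotential C).RegularAt x := by
  intro k
  fin_cases k
  · right; intro m; fin_cases m <;> simp [prepotential]
  · right; intro m; fin_cases m <;> simp [prepotential]
  · exact .inl hx

noncomputable def thirdDerivMatrix (C s : ℝ) : Fin 3 → Matrix (Fin 3) (Fin 3) ℝ :=
  ![!![0, 0, C; 0, C, 0; C, 0, 0],
    !![0, C, 0; C, 3 * C * s, -(3 * C / 2) * s ^ 2; 0, -(3 * C / 2) * s ^ 2, C * s ^ 3],
    !![C, 0, 0; 0, -(3 * C / 2) * s ^ 2, C * s ^ 3; 0, C * s ^ 3, -(3 * C / 4) * s ^ 4]]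

theorem pd3rd_prepotential (C : ℝ) {x : Fin 3 → ℝ} (hx : x 2 ≠ 0) (i j a : Fin 3) :
    pd3rd (prepotential C).eval i j a x = thirdDerivMatrix C (x 1 / x 2) j i a := by
  rw [(prepotential_regularAt C hx).pd3rd_eval]
  fin_cases i <;> fin_cases j <;> fin_cases a <;>
    simp [LaurentSum.eval, LaurentSum.pderiv, prepotential, thirdDerivMatrix, Fin.sum_univ_three,
      Fin.prod_univ_three, Pi.single_apply, -mul_eq_zero] <;>
    ring

theorem thirdDerivMatrix_isSymm (C s : ℝ) (j : Fin 3) : (thirdDerivMatrix C s j).IsSymm := by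
  fin_cases j <;> ext a b <;> fin_cases a <;> fin_cases b <;> rfl

theorem thirdDerivMatrix_swap (C s : ℝ) (i j a : Fin 3) :
    thirdDerivMatrix C s j i a = thirdDerivMatrix C s i j a := by
  fin_cases i <;> fin_cases j <;> fin_cases a <;> rfl

theorem inv_thirdDerivMatrix_zero {C : ℝ} (hC : C ≠ 0) (s : ℝ) :
    (thirdDerivMatrix C s 0)⁻¹ = C⁻¹ • !![0, 0, 1; 0, 1, 0; 1, 0, 0] := by
  refine inv_eq_left_inv ?_
  ext a b
  fin_cases a <;> fin_cases b <;> simp [thirdDerivMatrix, mul_apply, Fin.sum_univ_three, hC]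

theorem thirdDerivMatrix_commute {C : ℝ} (hC : C ≠ 0) (s : ℝ) (j l : Fin 3) :
    thirdDerivMatrix C s j * (thirdDerivMatrix C s 0)⁻¹ * thirdDerivMatrix C s l =
      thirdDerivMatrix C s l * (thirdDerivMatrix C s 0)⁻¹ * thirdDerivMatrix C s j := by
  set M := thirdDerivMatrix C s
  have hdet : IsUnit (M 0).det := by
    simp [M, thirdDerivMatrix, det_fin_three, hC]
  have h0 : ∀ l, M 0 * (M 0)⁻¹ * M l = M l * (M 0)⁻¹ * M 0 := fun l => by
    rw [mul_nonsing_inv _ hdet, Matrix.one_mul, nonsing_inv_mul_cancel_right _ _ hdet]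
  have h12 : M 1 * (M 0)⁻¹ * M 2 = M 2 * (M 0)⁻¹ * M 1 := by
    rw [inv_thirdDerivMatrix_zero hC]
    ext a b
    fin_cases a <;> fin_cases b <;> simp [M, thirdDerivMatrix, mul_apply, Fin.sum_univ_three] <;>
      ring
  fin_cases j <;> fin_cases l
  all_goals first | rfl | exact h0 _ | exact (h0 _).symm | exact h12 | exact h12.symm

theorem stmt_12 (C₄ : ℝ) (hC₄ : C₄ ≠ 0) :
    SatisfiesWDVV !![0, 0, C₄; 0, C₄, 0; C₄, 0, 0]
      (fun x : Fin 3 → ℝ =>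
        C₄ / 2 * (x 0) ^ 2 * x 2 + C₄ / 2 * x 0 * (x 1) ^ 2
          + C₄ / 8 * (x 1) ^ 4 / x 2)
      {x : Fin 3 → ℝ | x 2 ≠ 0} := by
  intro x hx i j k l
  rw [← prepotential_eval C₄]
  simp only [pd3rd_prepotential C₄ hx]
  exact wdvv_of_commute (thirdDerivMatrix_isSymm C₄ _ 0).inv (thirdDerivMatrix_isSymm C₄ _)
    (thirdDerivMatrix_swap C₄ _) (thirdDerivMatrix_commute hC₄ _) i j k l
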